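/- For every integer K ≥ 8, log(K·log K)·H_{σ,2} > log(2K)·H_{σ,2} ≥ H_{σ,1}, where H_{σ,1} and H_{σ,2} are defined from any gaps Δᵢ ∈ (0,1] and variances σᵢ ≥ 0 as H_{σ,1} = Σᵢ (σᵢ + sqrt(σᵢ² + (16/3)Δᵢ))/Δᵢ² and H_{σ,2} = max_i i/Δ̃_{(i)}² with Δ̃ᵢ² = Δᵢ²/(σᵢ + sqrt(σᵢ² + (16/3)Δᵢ)) sorted increasingly. -/

import Mathlib

/-!
The `H₁`-summands are the `1 / g i`, so `H₁ = ∑ i, 1 / gs i`, and `H₂ ≥ (i + 1) / gs i` gives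
`1 / gs i ≤ H₂ / (i + 1)`; summing, `H₁ ≤ harmonic K * H₂`. The Euler–Mascheroni bound
`harmonic n - log n < 2 / 3 < log 2` for `n ≥ 6` turns this into `H₁ ≤ log (2K) * H₂`.
The strict inequality is `2K < K log K`, i.e. `e ^ 2 < 8 ≤ K`.
-/

open Real Finset

lemma harmonic_lt_log_two_mul {n : ℕ} (hn : 6 ≤ n) : (harmonic n : ℝ) < log (2 * n) := by
  have hγ : eulerMascheroniSeq' n < 2 / 3 :=
    (strictAnti_eulerMascheroniSeq'.antitone hn).trans_lt eulerMascheroniSeq'_six_lt_two_thirds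
  rw [eulerMascheroniSeq', if_neg (by omega)] at hγ
  rw [log_mul two_ne_zero (by positivity)]
  linarith [log_two_gt_d9]

lemma two_lt_log_of_eight_le {x : ℝ} (hx : 8 ≤ x) : 2 < log x := by
  rw [lt_log_iff_exp_lt (by linarith), show (2 : ℝ) = 1 + 1 by norm_num, exp_add]
  nlinarith [exp_one_lt_d9, exp_pos 1]

lemma add_sqrt_sq_add_pos {a b : ℝ} (hb : 0 < b) : 0 < a + √(a ^ 2 + b) := by
  have : |a| < √(a ^ 2 + b) := by
    rw [← sqrt_sq_eq_abs]
    exact sqrt_lt_sqrt (sq_nonneg a) (by linarith)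
  linarith [neg_abs_le a]

lemma sum_inv_le_harmonic_mul_sup' {n : ℕ} (f : Fin n → ℝ)
    (hne : (univ : Finset (Fin n)).Nonempty) :
    ∑ i, (f i)⁻¹ ≤ harmonic n * univ.sup' hne (fun i : Fin n => ((i : ℕ) + 1 : ℝ) / f i) := by
  set H := univ.sup' hne (fun i : Fin n => ((i : ℕ) + 1 : ℝ) / f i)
  have hterm (i : Fin n) : (f i)⁻¹ ≤ H * ((i : ℕ) + 1 : ℝ)⁻¹ := by
    have hi : (0 : ℝ) < (i : ℕ) + 1 := by positivity
    rw [← div_eq_mul_inv, le_div_iff₀ hi, ← div_eq_inv_mul]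
    exact le_sup' (fun i : Fin n => ((i : ℕ) + 1 : ℝ) / f i) (mem_univ i)
  calc ∑ i, (f i)⁻¹ ≤ ∑ i : Fin n, H * ((i : ℕ) + 1 : ℝ)⁻¹ := sum_le_sum fun i _ => hterm i
    _ = harmonic n * H := by
      rw [← mul_sum, mul_comm, harmonic, Fin.sum_univ_eq_sum_range (fun i => ((i : ℝ) + 1)⁻¹)]
      push_cast
      rfl

theorem stmt_12_general (K : ℕ) (hK : 8 ≤ K) (Δ σ : Fin K → ℝ)
    (hΔ : ∀ i, Δ i ∈ Set.Ioc (0 : ℝ) 1)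
    (g : Fin K → ℝ)
    (hg : ∀ i, g i = (Δ i) ^ 2 / (σ i + Real.sqrt ((σ i) ^ 2 + (16 / 3) * Δ i)))
    (e : Equiv.Perm (Fin K)) (gs : Fin K → ℝ) (hgs : gs = g ∘ e)
    (hne : (Finset.univ : Finset (Fin K)).Nonempty)
    (H₁ H₂ : ℝ)
    (hH₁ : H₁ = ∑ i : Fin K, (σ i + Real.sqrt ((σ i) ^ 2 + (16 / 3) * Δ i)) / (Δ i) ^ 2)
    (hH₂ : H₂ = Finset.univ.sup' hne (fun i : Fin K => ((i : ℕ) + 1 : ℝ) / gs i)) :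
    Real.log (2 * K) * H₂ < Real.log (K * Real.log K) * H₂ ∧
      H₁ ≤ Real.log (2 * K) * H₂ := by
  have hg_pos (i : Fin K) : 0 < g i := by
    rw [hg i]
    exact div_pos (pow_pos (hΔ i).1 2) (add_sqrt_sq_add_pos (by linarith [(hΔ i).1]))
  have hH₂_pos : 0 < H₂ := by
    let i₀ : Fin K := ⟨0, by omega⟩
    have : ((i₀ : ℕ) + 1 : ℝ) / gs i₀ ≤ H₂ :=
      hH₂ ▸ le_sup' (fun i : Fin K => ((i : ℕ) + 1 : ℝ) / gs i) (mem_univ i₀)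
    exact (div_pos (by positivity) (hgs ▸ hg_pos (e i₀))).trans_le this
  have hH₁_eq : H₁ = ∑ i, (gs i)⁻¹ := by
    simp only [hH₁, hgs, hg, inv_div, Function.comp_apply]
    exact (Equiv.sum_comp e _).symm
  have hK₀ : (0 : ℝ) < K := by positivity
  have hlog : 2 * (K : ℝ) < K * log K := by
    nlinarith [two_lt_log_of_eight_le (x := K) (by exact_mod_cast hK)]
  refine ⟨mul_lt_mul_of_pos_right (log_lt_log (by positivity) hlog) hH₂_pos, ?_⟩
  calc H₁ ≤ harmonic K * H₂ := hH₁_eq ▸ hH₂ ▸ sum_inv_le_harmonic_mul_sup' gs hne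
    _ ≤ log (2 * K) * H₂ :=
      mul_le_mul_of_nonneg_right (harmonic_lt_log_two_mul (by omega)).le hH₂_pos.le

theorem stmt_12 (K : ℕ) (hK : 8 ≤ K) (Δ σ : Fin K → ℝ)
    (hΔ : ∀ i, Δ i ∈ Set.Ioc (0 : ℝ) 1) (hσ : ∀ i, 0 ≤ σ i)
    (g : Fin K → ℝ)
    (hg : ∀ i, g i = (Δ i) ^ 2 / (σ i + Real.sqrt ((σ i) ^ 2 + (16 / 3) * Δ i)))
    (e : Equiv.Perm (Fin K)) (gs : Fin K → ℝ) (hgs : gs = g ∘ e) (hsort : Monotone gs)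
    (hne : (Finset.univ : Finset (Fin K)).Nonempty)
    (H₁ H₂ : ℝ)
    (hH₁ : H₁ = ∑ i : Fin K, (σ i + Real.sqrt ((σ i) ^ 2 + (16 / 3) * Δ i)) / (Δ i) ^ 2)
    (hH₂ : H₂ = Finset.univ.sup' hne (fun i : Fin K => ((i : ℕ) + 1 : ℝ) / gs i)) :
    Real.log (2 * K) * H₂ < Real.log (K * Real.log K) * H₂ ∧
      H₁ ≤ Real.log (2 * K) * H₂ :=
  stmt_12_general K hK Δ σ hΔ g hg e gs hgs hne H₁ H₂ hH₁ hH₂
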